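/- arXiv:1206.1356 — 12 statements merged into one kernel-verified Lean document; each statement's English description precedes it below -/
import Mathlib

section
/- Let G be a uniquely 2-divisible group and define x ∘ y = x·y·[y,x]^(1/2). Then ∘ is commutative: x ∘ y = y ∘ x for all x, y ∈ G. -/
theorem gamma_op_comm {G : Type*} [Group G]
    (hbij : Function.Bijective (fun x : G => x * x))
    (sq : G → G) (hsq : ∀ a, sq a * sq a = a)
    (huniq : ∀ a b, b * b = a → b = sq a)
    (op : G → G → G)
    (hop : ∀ x y, op x y = x * y * sq (y⁻¹ * x⁻¹ * y * x)) :
    ∀ x y : G, op x y = op y x := by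
  intro x y
  rw [hop, hop]
  set s := sq (y⁻¹ * x⁻¹ * y * x) with hs
  have hss : s * s = y⁻¹ * x⁻¹ * y * x := hsq _
  have hinv : sq (x⁻¹ * y⁻¹ * x * y) = s⁻¹ := by
    symm
    apply huniq
    rw [← mul_inv_rev, hss]
    group
  rw [hinv]
  have : y * x * s⁻¹ = y * x * (s * s)⁻¹ * s := by group
  rw [this, hss]
  group
end

section
/- Let G be a uniquely 2-divisible group and define x ∘ y = x·y·[y,x]^(1/2). Then (x ∘ y)⁻¹ = x⁻¹ ∘ y⁻¹ for all x, y ∈ G (automorphic inverse property). -/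
theorem gamma_op_aip {G : Type*} [Group G]
    (hbij : Function.Bijective (fun x : G => x * x))
    (sq : G → G) (hsq : ∀ a, sq a * sq a = a)
    (huniq : ∀ a b, b * b = a → b = sq a)
    (op : G → G → G)
    (hop : ∀ x y, op x y = x * y * sq (y⁻¹ * x⁻¹ * y * x)) :
    ∀ x y : G, (op x y)⁻¹ = op x⁻¹ y⁻¹ := by
  have h1 : ∀ w : G, (sq w)⁻¹ * w * (sq w)⁻¹ = 1 := by
    intro w
    calc (sq w)⁻¹ * w * (sq w)⁻¹ = (sq w)⁻¹ * (sq w * sq w) * (sq w)⁻¹ := by rw [hsq]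
      _ = 1 := by group
  intro x y
  rw [hop, hop]
  simp only [inv_inv]
  have main : y * x * (sq (y⁻¹ * x⁻¹ * y * x))⁻¹ * y⁻¹ * x⁻¹ = sq (y * x * y⁻¹ * x⁻¹) := by
    apply huniq
    have h := h1 (y⁻¹ * x⁻¹ * y * x)
    set s := sq (y⁻¹ * x⁻¹ * y * x) with hs
    calc (y * x * s⁻¹ * y⁻¹ * x⁻¹) * (y * x * s⁻¹ * y⁻¹ * x⁻¹)
        = y * x * (s⁻¹ * (y⁻¹ * x⁻¹ * y * x) * s⁻¹) * (y⁻¹ * x⁻¹) := by group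
      _ = y * x * y⁻¹ * x⁻¹ := by rw [h]; group
  rw [← main]
  group
end

section
/- Let G be a uniquely 2-divisible group with x ∘ y = xy[y,x]^(1/2). Then for all x, y ∈ G, xyx = {x(y∘x)x(y∘x)⁻¹}^(1/2) · (y∘x). -/
theorem gamma_op_xyx {G : Type*} [Group G]
    (hbij : Function.Bijective (fun x : G => x * x))
    (sq : G → G) (hsq : ∀ a, sq a * sq a = a)
    (huniq : ∀ a b, b * b = a → b = sq a)
    (op : G → G → G)
    (hop : ∀ x y, op x y = x * y * sq (y⁻¹ * x⁻¹ * y * x)) :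
    ∀ x y : G, x * y * x = sq (x * op y x * x * (op y x)⁻¹) * op y x := by
  intro x y
  rw [hop]
  set s := sq (x⁻¹ * y⁻¹ * x * y) with hsdef
  have hs : s * s = x⁻¹ * y⁻¹ * x * y := hsq _
  have hsi : s⁻¹ = s * (x⁻¹ * y⁻¹ * x * y)⁻¹ := by rw [← hs]; group
  have key : x * y * x * (y * x * s)⁻¹ = sq (x * (y * x * s) * x * (y * x * s)⁻¹) := by
    apply huniq
    simp only [mul_inv_rev]
    rw [hsi]
    group
  rw [← key]
  group
end

section
/- Let G be a uniquely 2-divisible group with x ∘ y = xy[y,x]^(1/2). Then for each a, b ∈ G, the element x = {a⁻¹ba⁻¹b⁻¹}^(1/2) · b is the unique solution of a ∘ x = b. In particular, for each a the map x ↦ a ∘ x is a bijection of G. -/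
theorem gamma_op_unique_solution {G : Type*} [Group G]
    (hbij : Function.Bijective (fun x : G => x * x))
    (sq : G → G) (hsq : ∀ a, sq a * sq a = a)
    (huniq : ∀ a b, b * b = a → b = sq a)
    (op : G → G → G)
    (hop : ∀ x y, op x y = x * y * sq (y⁻¹ * x⁻¹ * y * x)) :
    (∀ a b : G, op a (sq (a⁻¹ * b * a⁻¹ * b⁻¹) * b) = b ∧
      ∀ x : G, op a x = b → x = sq (a⁻¹ * b * a⁻¹ * b⁻¹) * b) ∧
    ∀ a : G, Function.Bijective (op a) := by
  have main : ∀ a b : G, op a (sq (a⁻¹ * b * a⁻¹ * b⁻¹) * b) = b ∧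
      ∀ x : G, op a x = b → x = sq (a⁻¹ * b * a⁻¹ * b⁻¹) * b := by
    intro a b
    constructor
    · set s := sq (a⁻¹ * b * a⁻¹ * b⁻¹) with hsdef
      have hs2 : s * s = a⁻¹ * b * a⁻¹ * b⁻¹ := hsq _
      rw [hop]
      have hB : s⁻¹ = s * (b * a * b⁻¹ * a) := by
        apply inv_eq_of_mul_eq_one_right
        rw [show s * (s * (b * a * b⁻¹ * a)) = s * s * (b * a * b⁻¹ * a) by group, hs2]
        group
      have hd : ((s * b)⁻¹ * a⁻¹ * b) * ((s * b)⁻¹ * a⁻¹ * b)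
          = (s * b)⁻¹ * a⁻¹ * (s * b) * a := by
        simp only [mul_inv_rev]
        rw [hB]
        group
      have heq := (huniq _ _ hd).symm
      rw [heq]
      group
    · intro x hx
      rw [hop] at hx
      have heq2 : sq (x⁻¹ * a⁻¹ * x * a) = x⁻¹ * a⁻¹ * b := by
        rw [← hx]; group
      have E := hsq (x⁻¹ * a⁻¹ * x * a)
      rw [heq2] at E
      have h : x * b⁻¹ * (x * b⁻¹) = a⁻¹ * b * a⁻¹ * b⁻¹ := by
        have h1 : a⁻¹ * b * a⁻¹ * b⁻¹
            = x * b⁻¹ * a * x * (x⁻¹ * a⁻¹ * b * (x⁻¹ * a⁻¹ * b)) * a⁻¹ * b⁻¹ := by group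
        rw [h1, E]; group
      have h2 := huniq _ _ h
      rw [← h2]; group
  refine ⟨main, fun a => ⟨fun x y hxy => ?_, fun b => ⟨_, (main a b).1⟩⟩⟩
  have hx := (main a (op a y)).2 x hxy
  have hy := (main a (op a y)).2 y rfl
  rw [hx]; exact hy.symm
end

section
/- Let G be a uniquely 2-divisible group with x ∘ y = xy[y,x]^(1/2). Then for all x, y ∈ G, x⁻¹ ∘ (xy) = x ∘ (yx⁻¹). -/
theorem gamma_op_inv_left {G : Type*} [Group G]
    (hbij : Function.Bijective (fun x : G => x * x))
    (sq : G → G) (hsq : ∀ a, sq a * sq a = a)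
    (huniq : ∀ a b, b * b = a → b = sq a)
    (op : G → G → G)
    (hop : ∀ x y, op x y = x * y * sq (y⁻¹ * x⁻¹ * y * x)) :
    ∀ x y : G, op x⁻¹ (x * y) = op x (y * x⁻¹) := by
  intro x y
  have hconj : ∀ g a : G, sq (g⁻¹ * a * g) = g⁻¹ * sq a * g := by
    intro g a
    refine (huniq _ _ ?_).symm
    have h : g⁻¹ * sq a * g * (g⁻¹ * sq a * g) = g⁻¹ * (sq a * sq a) * g := by group
    rw [h, hsq a]
  have hinv : ∀ a : G, sq a⁻¹ = (sq a)⁻¹ := by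
    intro a
    refine (huniq _ _ ?_).symm
    rw [← mul_inv_rev, hsq]
  set c := x * y * x⁻¹ * y⁻¹ with hc
  set s := sq c with hsdef
  have hs : s * s = c := hsq c
  have e1 : (x * y)⁻¹ * (x⁻¹)⁻¹ * (x * y) * x⁻¹ = y⁻¹ * c * y := by rw [hc]; group
  have e2 : (y * x⁻¹)⁻¹ * x⁻¹ * (y * x⁻¹) * x = (x * y * x⁻¹)⁻¹ * c⁻¹ * (x * y * x⁻¹) := by
    rw [hc]; group
  rw [hop, hop, e1, e2, hconj, hconj, hinv]
  have key : s * y = s⁻¹ * (x * y * x⁻¹) := by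
    have h2 : s * (s * y) = s * (s⁻¹ * (x * y * x⁻¹)) := by
      rw [← mul_assoc, hs, hc]; group
    exact mul_left_cancel h2
  have L : x⁻¹ * (x * y) * (y⁻¹ * s * y) = s * y := by group
  have R : x * (y * x⁻¹) * ((x * y * x⁻¹)⁻¹ * s⁻¹ * (x * y * x⁻¹)) = s⁻¹ * (x * y * x⁻¹) := by
    group
  rw [L, R, key]
end

section
/- Let G be a uniquely 2-divisible group with x ∘ y = xy[y,x]^(1/2). Then for all x, y ∈ G, x⁻¹ ∘ (x ∘ y) = x ∘ (x⁻¹ ∘ y). -/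
theorem gamma_op_LxLxinv_comm {G : Type*} [Group G]
    (hbij : Function.Bijective (fun x : G => x * x))
    (sq : G → G) (hsq : ∀ a, sq a * sq a = a)
    (huniq : ∀ a b, b * b = a → b = sq a)
    (op : G → G → G)
    (hop : ∀ x y, op x y = x * y * sq (y⁻¹ * x⁻¹ * y * x)) :
    ∀ x y : G, op x⁻¹ (op x y) = op x (op x⁻¹ y) := by
  intro x y
  have hinv : ∀ a : G, sq a⁻¹ = (sq a)⁻¹ := fun a =>
    (huniq a⁻¹ (sq a)⁻¹ (by rw [← mul_inv_rev, hsq])).symm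
  have hconj : ∀ (g a : G), sq (g * a * g⁻¹) = g * sq a * g⁻¹ := by
    intro g a
    refine (huniq _ _ ?_).symm
    have h : g * sq a * g⁻¹ * (g * sq a * g⁻¹) = g * (sq a * sq a) * g⁻¹ := by group
    rw [h, hsq]
  set t := sq (y⁻¹ * x⁻¹ * y * x) with ht
  have ht2 : t * t = y⁻¹ * x⁻¹ * y * x := hsq _
  set s := x * t⁻¹ * x⁻¹ with hsdef
  have hs : sq (y⁻¹ * x * y * x⁻¹) = s := by
    have h1 : y⁻¹ * x * y * x⁻¹ = x * (y⁻¹ * x⁻¹ * y * x)⁻¹ * x⁻¹ := by group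
    rw [h1, hconj, hinv, ← ht, hsdef]
  have key : y⁻¹ * x * y = x * (t * t)⁻¹ := by rw [ht2]; group
  have key2 : y⁻¹ * x⁻¹ * y = (t * t) * x⁻¹ := by rw [ht2]; group
  have eqL : op x⁻¹ (op x y) = y * t * sq (t⁻¹ * s) := by
    rw [hop x y, hop x⁻¹, ← ht]
    have hA : (x * y * t)⁻¹ * x⁻¹⁻¹ * (x * y * t) * x⁻¹ = t⁻¹ * s := by
      have h2 : (x * y * t)⁻¹ * x⁻¹⁻¹ * (x * y * t) * x⁻¹
          = t⁻¹ * (y⁻¹ * x * y) * (t * x⁻¹) := by group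
      rw [h2, key, hsdef]; group
    rw [hA]; group
  have eqR : op x (op x⁻¹ y) = y * s * sq (s⁻¹ * t) := by
    rw [hop x⁻¹ y]
    have h3 : y⁻¹ * x⁻¹⁻¹ * y * x⁻¹ = y⁻¹ * x * y * x⁻¹ := by group
    rw [h3, hs, hop x]
    have hB : (x⁻¹ * y * s)⁻¹ * x⁻¹ * (x⁻¹ * y * s) * x = s⁻¹ * t := by
      have h4 : (x⁻¹ * y * s)⁻¹ * x⁻¹ * (x⁻¹ * y * s) * x
          = s⁻¹ * (y⁻¹ * x⁻¹ * y) * (s * x) := by group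
      rw [h4, key2, hsdef]; group
    rw [hB]; group
  rw [eqL, eqR]
  have h5 : sq (s⁻¹ * t) = (sq (t⁻¹ * s))⁻¹ := by
    rw [← hinv]; congr 1; group
  rw [h5]
  have h6 : t * (sq (t⁻¹ * s) * sq (t⁻¹ * s)) = s := by rw [hsq]; group
  generalize hw : sq (t⁻¹ * s) = w at h6 ⊢
  rw [← h6]; group
end

section
/- Let G be a uniquely 2-divisible group with x ∘ y = xy[y,x]^(1/2), and define left division a \∘ b as the unique c with a ∘ c = b. Then a \∘ b = {a⁻¹ba⁻¹b⁻¹}^(1/2)·b for all a, b ∈ G. -/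
theorem gamma_op_ldiv_formula {G : Type*} [Group G]
    (hbij : Function.Bijective (fun x : G => x * x))
    (sq : G → G) (hsq : ∀ a, sq a * sq a = a)
    (huniq : ∀ a b, b * b = a → b = sq a)
    (op : G → G → G)
    (hop : ∀ x y, op x y = x * y * sq (y⁻¹ * x⁻¹ * y * x))
    (ld : G → G → G)
    (hld : ∀ a b c, op a c = b ↔ c = ld a b) :
    ∀ a b : G, ld a b = sq (a⁻¹ * b * a⁻¹ * b⁻¹) * b := by
  intro a b
  set s := sq (a⁻¹ * b * a⁻¹ * b⁻¹) with hs
  have hs2 : s * s = a⁻¹ * b * a⁻¹ * b⁻¹ := hsq _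
  have h1 : s * s * (b * a) = a⁻¹ * b := by rw [hs2]; group
  have h2 : s * (b * a) = s⁻¹ * (a⁻¹ * b) := by rw [← h1]; group
  have key : sq ((s * b)⁻¹ * a⁻¹ * (s * b) * a) = b⁻¹ * s⁻¹ * a⁻¹ * b := by
    refine (huniq _ _ ?_).symm
    have e : (b⁻¹ * s⁻¹ * a⁻¹ * b) * (b⁻¹ * s⁻¹ * a⁻¹ * b)
        = b⁻¹ * s⁻¹ * a⁻¹ * (s⁻¹ * (a⁻¹ * b)) := by group
    rw [e, ← h2]; group
  have hopc : op a (s * b) = b := by rw [hop, key]; group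
  exact ((hld a b (s * b)).mp hopc).symm
end

section
/- Let G be a uniquely 2-divisible group with x ∘ y = xy[y,x]^(1/2) and left division a \∘ b = {a⁻¹ba⁻¹b⁻¹}^(1/2)·b. Then for all x, y ∈ G, x⁻¹ \∘ (y ∘ x) = xyx. -/
theorem gamma_op_P_formula {G : Type*} [Group G]
    (hbij : Function.Bijective (fun x : G => x * x))
    (sq : G → G) (hsq : ∀ a, sq a * sq a = a)
    (huniq : ∀ a b, b * b = a → b = sq a)
    (op : G → G → G)
    (hop : ∀ x y, op x y = x * y * sq (y⁻¹ * x⁻¹ * y * x))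
    (ld : G → G → G)
    (hld : ∀ a b, ld a b = sq (a⁻¹ * b * a⁻¹ * b⁻¹) * b) :
    ∀ x y : G, ld x⁻¹ (op y x) = x * y * x := by
  intro x y
  rw [hld, hop]
  set s := sq (x⁻¹ * y⁻¹ * x * y) with hsdef
  have hs : s * s = x⁻¹ * y⁻¹ * x * y := hsq _
  have key : x * y * x * (y * x * s)⁻¹ =
      sq ((x⁻¹)⁻¹ * (y * x * s) * (x⁻¹)⁻¹ * (y * x * s)⁻¹) := by
    apply huniq
    have : (x * y * x * (y * x * s)⁻¹) * (x * y * x * (y * x * s)⁻¹)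
        = x * y * x * s⁻¹ * (s * s) * x * s⁻¹ * x⁻¹ * y⁻¹ := by
      rw [hs]; group
    rw [this]; group
  rw [← key]
  group
end

section
/- Let G be a uniquely 2-divisible group with x ∘ y = xy[y,x]^(1/2) and left division a \∘ b = {a⁻¹ba⁻¹b⁻¹}^(1/2)·b. Define x ⊕∘ y = (x⁻¹ \∘ (y² ∘ x))^(1/2). Then x ⊕∘ y = (xy²x)^(1/2) for all x, y ∈ G, i.e., the Bruck loop operation built from the Γ-loop operation coincides with the standard Bruck loop operation on G. -/
theorem same_bruck {G : Type*} [Group G]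
    (hbij : Function.Bijective (fun x : G => x * x))
    (sq : G → G) (hsq : ∀ a, sq a * sq a = a)
    (huniq : ∀ a b, b * b = a → b = sq a)
    (op : G → G → G)
    (hop : ∀ x y, op x y = x * y * sq (y⁻¹ * x⁻¹ * y * x))
    (ld : G → G → G)
    (hld : ∀ a b, ld a b = sq (a⁻¹ * b * a⁻¹ * b⁻¹) * b)
    (oplus : G → G → G)
    (hoplus : ∀ x y, oplus x y = sq (ld x⁻¹ (op (y * y) x))) :
    ∀ x y : G, oplus x y = sq (x * (y * y) * x) := by
  intro x y
  set c := sq (x⁻¹ * (y * y)⁻¹ * x * (y * y)) with hc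
  have hc2 : c * c = x⁻¹ * (y * y)⁻¹ * x * (y * y) := hsq _
  set b := (y * y) * x * c with hbdef
  have hb : op (y * y) x = b := by rw [hop]
  have key : (x * (y * y) * x * b⁻¹) * (x * (y * y) * x * b⁻¹)
      = x * b * x * b⁻¹ := by
    rw [hbdef]
    calc (x * (y * y) * x * ((y * y) * x * c)⁻¹) * (x * (y * y) * x * ((y * y) * x * c)⁻¹)
        = x * (y * y) * x * c⁻¹ * (x⁻¹ * (y * y)⁻¹ * x * (y * y)) * x * c⁻¹ * x⁻¹ * (y * y)⁻¹ := by
          group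
      _ = x * (y * y) * x * c⁻¹ * (c * c) * x * c⁻¹ * x⁻¹ * (y * y)⁻¹ := by rw [hc2]
      _ = x * ((y * y) * x * c) * x * ((y * y) * x * c)⁻¹ := by group
  have hsqkey : sq (x * b * x * b⁻¹) = x * (y * y) * x * b⁻¹ :=
    (huniq _ _ key).symm
  have hldv : ld x⁻¹ (op (y * y) x) = x * (y * y) * x := by
    rw [hb, hld, inv_inv, hsqkey]
    group
  rw [hoplus, hldv, ← huniq _ _ (hsq (x * (y * y) * x))]
end

section
/- Let G be a uniquely 2-divisible group and define x ⊕ y = (xy²x)^(1/2). Then the left Bol identity holds: for all x, y, z ∈ G, (x ⊕ (y ⊕ x)) ⊕ z = x ⊕ (y ⊕ (x ⊕ z)). -/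
theorem bruck_op_bol {G : Type*} [Group G]
    (hbij : Function.Bijective (fun x : G => x * x))
    (sq : G → G) (hsq : ∀ a, sq a * sq a = a)
    (huniq : ∀ a b, b * b = a → b = sq a)
    (oplus : G → G → G)
    (hoplus : ∀ x y, oplus x y = sq (x * (y * y) * x)) :
    ∀ x y z : G, oplus (oplus x (oplus y x)) z = oplus x (oplus y (oplus x z)) := by
  intro x y z
  have key : oplus x (oplus y x) = x * y * x := by
    rw [hoplus x (oplus y x), hoplus y x, hsq]
    exact (huniq _ _ (by group)).symm
  rw [key]
  simp only [hoplus, hsq]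
  congr 1
  group
end

section
/- Let G be a uniquely 2-divisible group, τ ∈ Aut(G) with τ² = 1, and K(τ) = {g ∈ G : τ(g) = g⁻¹}. Then K(τ) is closed under the operation x ∘ y = xy[y,x]^(1/2): if x, y ∈ K(τ), then x ∘ y ∈ K(τ). -/
theorem K_tau_closed_gamma_op {G : Type*} [Group G]
    (hbij : Function.Bijective (fun x : G => x * x))
    (sq : G → G) (hsq : ∀ a, sq a * sq a = a)
    (huniq : ∀ a b, b * b = a → b = sq a)
    (op : G → G → G)
    (hop : ∀ x y, op x y = x * y * sq (y⁻¹ * x⁻¹ * y * x))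
    (τ : G ≃* G) (hτ : ∀ g, τ (τ g) = g) :
    ∀ x y : G, τ x = x⁻¹ → τ y = y⁻¹ → τ (op x y) = (op x y)⁻¹ := by
  intro x y hx hy
  have hsqτ : ∀ a, τ (sq a) = sq (τ a) := fun a =>
    huniq (τ a) (τ (sq a)) (by rw [← map_mul, hsq])
  set c := y⁻¹ * x⁻¹ * y * x with hc
  have hτc : τ c = y * x * y⁻¹ * x⁻¹ := by
    simp only [hc, map_mul, map_inv, hx, hy, inv_inv]
  have hB : (y * x * (sq c)⁻¹ * y⁻¹ * x⁻¹) * (y * x * (sq c)⁻¹ * y⁻¹ * x⁻¹) = τ c := by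
    set S := sq c with hS
    have h1 : S * S = c := hsq c
    have step : (y * x * S⁻¹ * y⁻¹ * x⁻¹) * (y * x * S⁻¹ * y⁻¹ * x⁻¹)
        = y * x * (S⁻¹ * (y⁻¹ * x⁻¹ * y * x) * S⁻¹) * y⁻¹ * x⁻¹ := by
      group
    rw [step, ← hc, hτc, ← h1]
    group
  have hBsq : y * x * (sq c)⁻¹ * y⁻¹ * x⁻¹ = sq (τ c) := huniq _ _ hB
  rw [hop x y, ← hc, map_mul, map_mul, hx, hy, hsqτ, ← hBsq]
  group
end

section
/- Let G be a uniquely 2-divisible group and define x ∘ y = xy[y,x]^(1/2). If G is nilpotent of class at most 2, then ∘ is associative, and in fact (G, ∘) is an abelian group with x ∘ y = xy[y,x]^(1/2) = (xy²x)^(1/2). -/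
theorem gamma_op_class_two {G : Type*} [Group G]
    (hbij : Function.Bijective (fun x : G => x * x))
    (sq : G → G) (hsq : ∀ a, sq a * sq a = a)
    (huniq : ∀ a b, b * b = a → b = sq a)
    (op : G → G → G)
    (hop : ∀ x y, op x y = x * y * sq (y⁻¹ * x⁻¹ * y * x))
    (hnil : ∀ a b c : G, Commute (a⁻¹ * b⁻¹ * a * b) c) :
    (∀ x y z : G, op (op x y) z = op x (op y z)) ∧
    (∀ x y : G, op x y = op y x) ∧
    (∀ x : G, op 1 x = x) ∧
    (∀ x y : G, op x y = sq (x * (y * y) * x)) := by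
  -- injectivity of squaring
  have inj : ∀ a b : G, a * a = b * b → a = b := by
    intro a b h
    exact (huniq (b*b) a h).trans (huniq (b*b) b rfl).symm
  -- square roots of central elements are central
  have hsqc : ∀ c : G, (∀ z, c * z = z * c) → ∀ z : G, sq c * z = z * sq c := by
    intro c hc z
    have h : (z⁻¹ * sq c * z) * (z⁻¹ * sq c * z) = c := by
      calc (z⁻¹ * sq c * z) * (z⁻¹ * sq c * z) = z⁻¹ * (sq c * sq c) * z := by group
        _ = z⁻¹ * (c * z) := by rw [hsq]; group
        _ = c := by rw [hc z]; group
    have h2 := huniq c _ h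
    calc sq c * z = z * (z⁻¹ * sq c * z) := by group
      _ = z * sq c := by rw [h2]
  -- main formula: op x y = sq (x * y^2 * x)
  have h4 : ∀ x y : G, op x y = sq (x * (y * y) * x) := by
    intro x y
    apply huniq
    rw [hop]
    have ht := hsqc (y⁻¹ * x⁻¹ * y * x) (fun z => (hnil y x z).eq)
    calc x * y * sq (y⁻¹ * x⁻¹ * y * x) * (x * y * sq (y⁻¹ * x⁻¹ * y * x))
        = x * y * (sq (y⁻¹ * x⁻¹ * y * x) * (x * y)) * sq (y⁻¹ * x⁻¹ * y * x) := by group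
      _ = x * y * (x * y * sq (y⁻¹ * x⁻¹ * y * x)) * sq (y⁻¹ * x⁻¹ * y * x) := by
          rw [ht (x * y)]
      _ = x * y * x * y * (sq (y⁻¹ * x⁻¹ * y * x) * sq (y⁻¹ * x⁻¹ * y * x)) := by group
      _ = x * y * x * y * (y⁻¹ * x⁻¹ * y * x) := by rw [hsq]
      _ = x * (y * y) * x := by group
  -- squares of op
  have hsq_op : ∀ a b : G, op a b * op a b = a * (b * b) * a := by
    intro a b; rw [h4]; exact hsq _
  refine ⟨?_, ?_, ?_, h4⟩
  · -- associativity
    intro x y z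
    apply inj
    rw [hsq_op (op x y) z, hsq_op x (op y z), hsq_op y z, hop x y]
    have ht := hsqc (y⁻¹ * x⁻¹ * y * x) (fun w => (hnil y x w).eq)
    calc x * y * sq (y⁻¹ * x⁻¹ * y * x) * (z * z) * (x * y * sq (y⁻¹ * x⁻¹ * y * x))
        = x * y * (sq (y⁻¹ * x⁻¹ * y * x) * (z * z * (x * y))) * sq (y⁻¹ * x⁻¹ * y * x) := by
          group
      _ = x * y * (z * z * (x * y) * sq (y⁻¹ * x⁻¹ * y * x)) * sq (y⁻¹ * x⁻¹ * y * x) := by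
          rw [ht (z * z * (x * y))]
      _ = x * y * z * z * x * y * (sq (y⁻¹ * x⁻¹ * y * x) * sq (y⁻¹ * x⁻¹ * y * x)) := by group
      _ = x * y * z * z * x * y * (y⁻¹ * x⁻¹ * y * x) := by rw [hsq]
      _ = x * (y * (z * z) * y) * x := by group
  · -- commutativity
    intro x y
    rw [h4 x y, h4 y x]
    congr 1
    have hc := (hnil y x (x * y)).eq
    calc x * (y * y) * x = x * y * (y * x) := by group
      _ = x * y * (x * y * (y⁻¹ * x⁻¹ * y * x)) := by group
      _ = x * y * ((y⁻¹ * x⁻¹ * y * x) * (x * y)) := by rw [hc]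
      _ = y * (x * x) * y := by group
  · -- identity
    intro x
    rw [hop]
    have h1 : x⁻¹ * (1:G)⁻¹ * x * 1 = 1 := by group
    rw [h1, ← huniq 1 1 (one_mul 1)]
    group
end
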